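/- Let P = (p₁,p₂,p₃,p₄) be any list of four points in ℝ², and define the generalized coordinatewise median GCM_P : (ℝ²)⁵ → ℝ² by letting the first coordinate of GCM_P(x) be the median (5th smallest) of the nine first coordinates of x₁,…,x₅,p₁,…,p₄, and similarly for the second coordinate. Let A = ((0,20),(0,10),(0,10),(0,10),(0,10)) (so opt(A) = 5), let x̃ be the second smallest among the first coordinates of p₁,…,p₄, and let B = ((x̃,0),(x̃,0),(x̃,0),(x̃−1,1),(x̃−1−1/√2, −1/√2)) (so opt(B) = 1). Then at least one of the following holds: (a) max_{1≤i≤5} ‖A_i − GCM_P(A)‖ ≥ 10 = 2·opt(A), or (b) max_{1≤i≤5} ‖B_i − GCM_P(B)‖ ≥ 1+√2 = (1+√2)·opt(B). -/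

import Mathlib

/-!
Everything follows from counting how many of the nine values lie on one side of a threshold.
If some phantom has second coordinate at most `10`, then on `A` five of the nine second
coordinates are at most `10`, so the output lies at height at most `10`, at distance at least
`10` from `(0, 20)`. Otherwise every phantom lies above height `1`, and on `B` five second
coordinates are at least `1`, while six first coordinates (three reports and the three largest
phantoms) are at least `x̃`. The output then lies up and to the right of `(x̃, 1)`, and each of
its coordinates differs from those of `(x̃ - 1 - 1/√2, -1/√2)` by at least `1 + 1/√2`, giving
distance at least `√2 (1 + 1/√2) = 1 + √2`.
-/

/-- The median (5th smallest element) of a list of nine reals, via sorting. -/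
noncomputable def median9 (l : List ℝ) : ℝ :=
  (l.insertionSort (· ≤ ·)).getD 4 0

/-- A point of the Euclidean plane from its two coordinates. -/
noncomputable def pt (a b : ℝ) : EuclideanSpace ℝ (Fin 2) :=
  (WithLp.equiv 2 (Fin 2 → ℝ)).symm ![a, b]

/-- The generalized coordinatewise median mechanism with four constant (phantom)
points `p`: each coordinate of the output is the median of the nine corresponding
coordinates of the five reports and the four phantom points. -/
noncomputable def gcm (p : Fin 4 → EuclideanSpace ℝ (Fin 2))
    (x : Fin 5 → EuclideanSpace ℝ (Fin 2)) : EuclideanSpace ℝ (Fin 2) :=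
  pt (median9 ((List.ofFn fun i => x i 0) ++ (List.ofFn fun j => p j 0)))
     (median9 ((List.ofFn fun i => x i 1) ++ (List.ofFn fun j => p j 1)))

section OrderStatistics

variable {α : Type*} [LinearOrder α]

namespace List

variable {s : List α} {k : ℕ}

theorem Pairwise.getElem_le_of_mem_drop (hs : s.Pairwise (· ≤ ·)) (hk : k < s.length) {a : α}
    (ha : a ∈ s.drop k) : s[k] ≤ a := by
  have hdrop := hs.sublist (drop_sublist k s)
  rw [drop_eq_getElem_cons hk] at hdrop ha
  rcases mem_cons.1 ha with rfl | ha
  · exact le_rfl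
  · exact rel_of_pairwise_cons hdrop ha

theorem Pairwise.le_getElem_of_mem_take (hs : s.Pairwise (· ≤ ·)) (hk : k < s.length) {a : α}
    (ha : a ∈ s.take (k + 1)) : a ≤ s[k] := by
  have htake := hs.sublist (take_sublist (k + 1) s)
  rw [← take_concat_get' s k hk] at htake ha
  rcases mem_append.1 ha with ha | ha
  · exact (pairwise_append.1 htake).2.2 a ha _ (mem_singleton_self _)
  · rw [mem_singleton.1 ha]

theorem Pairwise.countP_le_le_of_lt_getElem (hs : s.Pairwise (· ≤ ·)) (hk : k < s.length)
    {c : α} (hc : c < s[k]) : s.countP (· ≤ c) ≤ k := by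
  have hdrop : (s.drop k).countP (· ≤ c) = 0 :=
    countP_eq_zero.2 fun a ha => by simpa using hc.trans_le (hs.getElem_le_of_mem_drop hk ha)
  rw [← take_append_drop k s, countP_append, hdrop]
  exact countP_le_length.trans (by simp)

theorem Pairwise.countP_ge_add_lt_length_of_getElem_lt (hs : s.Pairwise (· ≤ ·))
    (hk : k < s.length) {c : α} (hc : s[k] < c) : s.countP (c ≤ ·) + k < s.length := by
  have htake : (s.take (k + 1)).countP (c ≤ ·) = 0 :=
    countP_eq_zero.2 fun a ha => by simpa using (hs.le_getElem_of_mem_take hk ha).trans_lt hc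
  have hdrop := countP_le_length (p := (c ≤ ·)) (l := s.drop (k + 1))
  rw [← take_append_drop (k + 1) s, countP_append, htake]
  simp only [length_drop, length_append, length_take] at hdrop ⊢
  omega

theorem Pairwise.length_le_countP_ge_add_of_le_getElem (hs : s.Pairwise (· ≤ ·))
    (hk : k < s.length) {c : α} (hc : c ≤ s[k]) : s.length ≤ s.countP (c ≤ ·) + k := by
  have hdrop : (s.drop k).countP (c ≤ ·) = (s.drop k).length :=
    countP_eq_length.2 fun a ha => by simpa using hc.trans (hs.getElem_le_of_mem_drop hk ha)
  rw [← take_append_drop k s, countP_append, hdrop]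
  simp only [length_drop, length_append, length_take]
  omega

end List

/-- The `k`-th smallest element of `l`, counting from `0` (junk value `0` if `k ≥ l.length`). -/
def orderStat [Zero α] (l : List α) (k : ℕ) : α :=
  (l.insertionSort (· ≤ ·)).getD k 0

variable [Zero α] {l : List α} {k : ℕ}

theorem orderStat_eq_getElem (hk : k < l.length) :
    orderStat l k = (l.insertionSort (· ≤ ·))[k]'(by simpa using hk) :=
  List.getD_eq_getElem _ _ _

theorem orderStat_le_of_lt_countP (hk : k < l.length) {c : α} (h : k < l.countP (· ≤ c)) :
    orderStat l k ≤ c := by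
  rw [orderStat_eq_getElem hk]
  by_contra! hc
  have := (List.pairwise_insertionSort _ l).countP_le_le_of_lt_getElem _ hc
  rw [(List.perm_insertionSort _ l).countP_eq] at this
  omega

theorem le_orderStat_of_length_le_countP (hk : k < l.length) {c : α}
    (h : l.length ≤ l.countP (c ≤ ·) + k) : c ≤ orderStat l k := by
  rw [orderStat_eq_getElem hk]
  by_contra! hc
  have := (List.pairwise_insertionSort _ l).countP_ge_add_lt_length_of_getElem_lt _ hc
  rw [(List.perm_insertionSort _ l).countP_eq, List.length_insertionSort] at this
  omega

theorem length_le_countP_orderStat_le (hk : k < l.length) :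
    l.length ≤ l.countP (orderStat l k ≤ ·) + k := by
  have := (List.pairwise_insertionSort _ l).length_le_countP_ge_add_of_le_getElem _
    (orderStat_eq_getElem hk).le
  rwa [(List.perm_insertionSort _ l).countP_eq, List.length_insertionSort] at this

end OrderStatistics

theorem abs_sub_apply_le_dist {ι : Type*} [Fintype ι] (x y : EuclideanSpace ℝ ι) (i : ι) :
    |x i - y i| ≤ dist x y :=
  (Real.dist_eq _ _).symm.trans_le (PiLp.dist_apply_le x y i)

theorem sqrt_two_mul_le_dist (x y : EuclideanSpace ℝ (Fin 2)) {r : ℝ} (hr : 0 ≤ r)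
    (h₀ : r ≤ |x 0 - y 0|) (h₁ : r ≤ |x 1 - y 1|) : √2 * r ≤ dist x y := by
  rw [EuclideanSpace.dist_eq, Fin.sum_univ_two, Real.dist_eq, Real.dist_eq]
  refine Real.le_sqrt_of_sq_le ?_
  rw [mul_pow, Real.sq_sqrt zero_le_two]
  linarith [pow_le_pow_left₀ hr h₀ 2, pow_le_pow_left₀ hr h₁ 2]

noncomputable def profileA : Fin 5 → EuclideanSpace ℝ (Fin 2) :=
  ![pt 0 20, pt 0 10, pt 0 10, pt 0 10, pt 0 10]

noncomputable def profileB (t : ℝ) : Fin 5 → EuclideanSpace ℝ (Fin 2) :=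
  ![pt t 0, pt t 0, pt t 0, pt (t - 1) 1, pt (t - 1 - 1 / √2) (-(1 / √2))]

theorem gcm_apply_one_profileA_le (p : Fin 4 → EuclideanSpace ℝ (Fin 2)) (h : ∃ j, p j 1 ≤ 10) :
    gcm p profileA 1 ≤ 10 := by
  obtain ⟨j, hj⟩ := h
  have hphantom : 0 < (List.ofFn fun j => p j 1).countP (· ≤ 10) :=
    List.countP_pos_iff.2 ⟨p j 1, List.mem_ofFn.2 ⟨j, rfl⟩, by simpa using hj⟩
  have hprofile : (List.ofFn fun i => profileA i 1).countP (· ≤ 10) = 4 := by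
    norm_num [profileA, List.ofFn_succ, pt]
  refine orderStat_le_of_lt_countP (by simp) ?_
  rw [List.countP_append, hprofile]
  omega

theorem ten_le_iSup_dist_profileA {y : EuclideanSpace ℝ (Fin 2)} (hy : y 1 ≤ 10) :
    10 ≤ ⨆ i, dist (profileA i) y := by
  refine Finite.le_ciSup_of_le 0 (le_trans ?_ (abs_sub_apply_le_dist _ _ 1))
  rw [show profileA 0 1 = 20 from rfl, le_abs]
  left
  linarith

theorem orderStat_le_gcm_apply_zero_profileB (p : Fin 4 → EuclideanSpace ℝ (Fin 2)) :
    orderStat (List.ofFn fun j => p j 0) 1 ≤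
      gcm p (profileB (orderStat (List.ofFn fun j => p j 0) 1)) 0 := by
  set t := orderStat (List.ofFn fun j => p j 0) 1
  have hprofile : (List.ofFn fun i => profileB t i 0).countP (t ≤ ·) = 3 := by
    have : ¬ t ≤ t - 1 - (√2)⁻¹ := by
      have : 0 < (√2)⁻¹ := by positivity
      linarith
    norm_num [profileB, List.ofFn_succ, pt, this]
  have hphantom : (List.ofFn fun j => p j 0).length ≤
      (List.ofFn fun j => p j 0).countP (t ≤ ·) + 1 :=
    length_le_countP_orderStat_le (by simp)
  refine le_orderStat_of_length_le_countP (by simp) ?_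
  rw [List.countP_append, hprofile]
  simp only [List.length_append, List.length_ofFn] at hphantom ⊢
  omega

theorem one_le_gcm_apply_one_profileB (p : Fin 4 → EuclideanSpace ℝ (Fin 2)) (h : ∀ j, 1 ≤ p j 1)
    (t : ℝ) : 1 ≤ gcm p (profileB t) 1 := by
  have hprofile : (List.ofFn fun i => profileB t i 1).countP (1 ≤ ·) = 1 := by
    have : ¬ 1 ≤ -(√2)⁻¹ := by
      have : 0 < (√2)⁻¹ := by positivity
      linarith
    norm_num [profileB, List.ofFn_succ, pt, this]
  have hphantom : (List.ofFn fun j => p j 1).countP (1 ≤ ·) = 4 := by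
    rw [List.countP_eq_length.2 fun a ha => ?_, List.length_ofFn]
    obtain ⟨j, rfl⟩ := List.mem_ofFn.1 ha
    simpa using h j
  refine le_orderStat_of_length_le_countP (by simp) ?_
  rw [List.countP_append, hprofile, hphantom]
  simp

theorem one_add_sqrt_two_le_iSup_dist_profileB {t : ℝ} {y : EuclideanSpace ℝ (Fin 2)}
    (hx : t ≤ y 0) (hy : 1 ≤ y 1) : 1 + √2 ≤ ⨆ i, dist (profileB t i) y := by
  have hr : 0 < 1 / √2 := by positivity
  refine Finite.le_ciSup_of_le 4 ?_
  rw [dist_comm]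
  calc 1 + √2 = √2 * (1 + 1 / √2) := by field_simp; ring
    _ ≤ dist y (profileB t 4) := by
      refine sqrt_two_mul_le_dist _ _ (by positivity) ?_ ?_
      · rw [show profileB t 4 0 = t - 1 - 1 / √2 from rfl, abs_of_nonneg (by linarith)]
        linarith
      · rw [show profileB t 4 1 = -(1 / √2) from rfl, abs_of_nonneg (by linarith)]
        linarith

/-- for any four phantom points `p`, the GCM mechanism incurs egalitarian
social cost at least `10 = 2·opt` on the profile
`A = ((0,20),(0,10),(0,10),(0,10),(0,10))`, or cost at least `1+√2 = (1+√2)·opt` on the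
profile `B = ((x̃,0),(x̃,0),(x̃,0),(x̃-1,1),(x̃-1-1/√2,-1/√2))`, where `x̃` is the second
smallest first coordinate of the four phantom points. -/
theorem stmt12 (p : Fin 4 → EuclideanSpace ℝ (Fin 2)) :
    let A : Fin 5 → EuclideanSpace ℝ (Fin 2) :=
      ![pt 0 20, pt 0 10, pt 0 10, pt 0 10, pt 0 10]
    let xt : ℝ := ((List.ofFn fun j => p j 0).insertionSort (· ≤ ·)).getD 1 0
    let B : Fin 5 → EuclideanSpace ℝ (Fin 2) :=
      ![pt xt 0, pt xt 0, pt xt 0, pt (xt - 1) 1,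
        pt (xt - 1 - 1 / Real.sqrt 2) (-(1 / Real.sqrt 2))]
    (10 ≤ ⨆ i, dist (A i) (gcm p A)) ∨
    (1 + Real.sqrt 2 ≤ ⨆ i, dist (B i) (gcm p B)) := by
  intro A xt B
  by_cases h : ∃ j, p j 1 ≤ 10
  · exact Or.inl (ten_le_iSup_dist_profileA (gcm_apply_one_profileA_le p h))
  · push Not at h
    exact Or.inr (one_add_sqrt_two_le_iSup_dist_profileB (orderStat_le_gcm_apply_zero_profileB p)
      (one_le_gcm_apply_one_profileB p (fun j => by linarith [h j]) xt))
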